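/- In the transvection group example, the cochain λ ∈ Hom_{A^e}(X_{1,1}, A) determined by λ((1 ⊗ gⁱ ⊗ 1) ⊗ (1 ⊗ v ⊗ 1)) = 0 and λ((1 ⊗ gⁱ ⊗ 1) ⊗ (1 ⊗ w ⊗ 1)) = i g^{i−1} for 0 ≤ i ≤ p−1, extended by zero to the other components of X₂, is a Hochschild 2-cocycle on the twisted product resolution X. -/

import Mathlib

open scoped TensorProduct
open MulOpposite

noncomputable section

universe u

variable (p : ℕ) [Fact p.Prime] (k : Type u) [Field k] [CharP k p]

/-- The submodule of middle-linearity relations defining the tensor product over `R`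
of a right `R`-module `M` and a left `R`-module `N`. -/
def midRel (R : Type u) [Ring R] (M N : Type u)
    [AddCommGroup M] [Module k M] [Module Rᵐᵒᵖ M]
    [AddCommGroup N] [Module k N] [Module R N] : Submodule k (M ⊗[k] N) :=
  Submodule.span k
    {z | ∃ (r : R) (m : M) (n : N), z = (op r • m) ⊗ₜ[k] n - m ⊗ₜ[k] (r • n)}

/-- The tensor product `M ⊗_R N` over `R`, as a quotient of `M ⊗[k] N`. -/
abbrev OverR (R : Type u) [Ring R] (M N : Type u)
    [AddCommGroup M] [Module k M] [Module Rᵐᵒᵖ M]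
    [AddCommGroup N] [Module k N] [Module R N] : Type u :=
  (M ⊗[k] N) ⧸ midRel k R M N

/-- The image of a pure tensor in `M ⊗_R N`. -/
abbrev omk (R : Type u) [Ring R] {M N : Type u}
    [AddCommGroup M] [Module k M] [Module Rᵐᵒᵖ M]
    [AddCommGroup N] [Module k N] [Module R N] (m : M) (n : N) :
    OverR k R M N :=
  Submodule.Quotient.mk (m ⊗ₜ[k] n)

/-- The middle-linearity relations for the triple tensor product `M ⊗_R M ⊗_R M`. -/
def midRel3 (R : Type u) [Ring R] (M : Type u)
    [AddCommGroup M] [Module k M] [Module R M] [Module Rᵐᵒᵖ M] :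
    Submodule k (M ⊗[k] (M ⊗[k] M)) :=
  Submodule.span k
    ({z | ∃ (r : R) (m n q : M),
        z = (op r • m) ⊗ₜ[k] (n ⊗ₜ[k] q) - m ⊗ₜ[k] ((r • n) ⊗ₜ[k] q)} ∪
     {z | ∃ (r : R) (m n q : M),
        z = m ⊗ₜ[k] ((op r • n) ⊗ₜ[k] q) - m ⊗ₜ[k] (n ⊗ₜ[k] (r • q))})

/-- The triple tensor product `M ⊗_R M ⊗_R M` over `R`. -/
abbrev Over3 (R : Type u) [Ring R] (M : Type u)
    [AddCommGroup M] [Module k M] [Module R M] [Module Rᵐᵒᵖ M] : Type u :=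
  (M ⊗[k] (M ⊗[k] M)) ⧸ midRel3 k R M

/-- The image of a pure tensor in `M ⊗_R M ⊗_R M`. -/
abbrev omk3 (R : Type u) [Ring R] {M : Type u}
    [AddCommGroup M] [Module k M] [Module R M] [Module Rᵐᵒᵖ M] (m n q : M) :
    Over3 k R M :=
  Submodule.Quotient.mk (m ⊗ₜ[k] (n ⊗ₜ[k] q))

/-- The cyclic group `G = ℤ/pℤ`, written multiplicatively, generated by the
transvection `g = (1 1 / 0 1)` acting on `V = k²`. -/
abbrev Gp : Type := Multiplicative (ZMod p)

/-- The generator `g` of `G ≅ ℤ/pℤ`. -/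
def gg : Gp p := Multiplicative.ofAdd (1 : ZMod p)

/-- `S = S(V) ≅ k[v,w]`, the symmetric algebra on `V = k²`. -/
abbrev SV : Type u := MvPolynomial (Fin 2) k

/-- The basis vector `v` of `V`, as an element of `S(V)`. -/
def vv : SV k := MvPolynomial.X 0

/-- The basis vector `w` of `V`, as an element of `S(V)`. -/
def ww : SV k := MvPolynomial.X 1

variable [MulSemiringAction (Gp p) (SV k)] [SMulCommClass (Gp p) k (SV k)]

variable (C : Type u) [AddCommGroup C] [Module k C]
  [Module (MonoidAlgebra k (Gp p)) C] [Module (MonoidAlgebra k (Gp p))ᵐᵒᵖ C]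
  [IsScalarTower k (MonoidAlgebra k (Gp p)) C]
  [IsScalarTower k (MonoidAlgebra k (Gp p))ᵐᵒᵖ C]
  [SMulCommClass (MonoidAlgebra k (Gp p)) (MonoidAlgebra k (Gp p))ᵐᵒᵖ C]
  [SMulCommClass (MonoidAlgebra k (Gp p)) k C]
  [SMulCommClass (MonoidAlgebra k (Gp p))ᵐᵒᵖ k C]

/-- The reduced bar resolution `C` of `kG`, `C_n = kG ⊗ (kG/k·1)^{⊗n} ⊗ kG`, presented by
its spanning generators: `gen n a` records `a 0 ⊗ (a 1)⁻ ⊗ ⋯ ⊗ (a n)⁻ ⊗ a (n+1)` for group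
elements `a t` (only the entries `a 0, …, a (n+1)` are relevant, and a generator vanishes
whenever one of its middle entries equals `1`).  The sign operator `ε_C` is included. -/
structure RedBarC : Type u where
  gr : ℕ → Submodule k C
  internal : DirectSum.IsInternal gr
  gen : ℕ → (ℕ → Gp p) → C
  gen_gr : ∀ (n : ℕ) (a : ℕ → Gp p), gen n a ∈ gr n
  gen_span : ∀ n : ℕ, gr n ≤ Submodule.span k {x | ∃ a : ℕ → Gp p, x = gen n a}
  gen_congr : ∀ (n : ℕ) (a b : ℕ → Gp p), (∀ t ≤ n + 1, a t = b t) → gen n a = gen n b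
  reduced : ∀ (n : ℕ) (a : ℕ → Gp p) (t : ℕ), 1 ≤ t → t ≤ n → a t = 1 → gen n a = 0
  smul_gen : ∀ (g₀ : Gp p) (n : ℕ) (a : ℕ → Gp p),
    (MonoidAlgebra.single g₀ (1 : k)) • gen n a =
      gen n (Function.update a 0 (g₀ * a 0))
  smul_op_gen : ∀ (g₁ : Gp p) (n : ℕ) (a : ℕ → Gp p),
    (op (MonoidAlgebra.single g₁ (1 : k))) • gen n a =
      gen n (Function.update a (n + 1) (a (n + 1) * g₁))
  d : C →ₗ[k] C
  d_gen : ∀ (n : ℕ) (a : ℕ → Gp p),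
    d (gen (n + 1) a) = ∑ i ∈ Finset.range (n + 2), (-1 : k) ^ i •
      gen n (fun t => if t < i then a t else if t = i then a i * a (i + 1) else a (t + 1))
  d_zero : ∀ a : ℕ → Gp p, d (gen 0 a) = 0
  aug : C →ₗ[k] MonoidAlgebra k (Gp p)
  aug_gen : ∀ a : ℕ → Gp p, aug (gen 0 a) = MonoidAlgebra.single (a 0 * a 1) (1 : k)
  aug_gr : ∀ (n : ℕ) (x : C), x ∈ gr (n + 1) → aug x = 0
  eps : C →ₗ[k] C
  eps_gen : ∀ (n : ℕ) (a : ℕ → Gp p), eps (gen n a) = (-1 : k) ^ n • gen n a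

variable (D : Type u) [AddCommGroup D] [Module k D]
  [Module (SV k) D] [Module (SV k)ᵐᵒᵖ D]
  [IsScalarTower k (SV k) D] [IsScalarTower k (SV k)ᵐᵒᵖ D]
  [SMulCommClass (SV k) (SV k)ᵐᵒᵖ D] [SMulCommClass (SV k) k D]
  [SMulCommClass (SV k)ᵐᵒᵖ k D]
  [DistribMulAction (Gp p) D] [SMulCommClass (Gp p) k D]

/-- The Koszul resolution `D` of `S = S(V)`, `D_j = S ⊗ Λ^j V ⊗ S` for `V = k²`,
presented by its generators: `gen0 s s' = s ⊗ s'`, `gen1v s s' = s ⊗ v ⊗ s'`,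
`gen1w s s' = s ⊗ w ⊗ s'` and `gen2 s s' = s ⊗ v∧w ⊗ s'`, with the Koszul differential,
augmentation given by multiplication, the evident `S`-bimodule structure, and the
`G`-action induced by `ᵍv = v`, `ᵍw = v + w`. -/
structure KoszulD : Type u where
  gr : ℕ → Submodule k D
  internal : DirectSum.IsInternal gr
  gr_top : ∀ n : ℕ, gr (n + 3) = ⊥
  gen0 : SV k →ₗ[k] SV k →ₗ[k] D
  gen1v : SV k →ₗ[k] SV k →ₗ[k] D
  gen1w : SV k →ₗ[k] SV k →ₗ[k] D
  gen2 : SV k →ₗ[k] SV k →ₗ[k] D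
  gen0_gr : ∀ s s' : SV k, gen0 s s' ∈ gr 0
  gen1v_gr : ∀ s s' : SV k, gen1v s s' ∈ gr 1
  gen1w_gr : ∀ s s' : SV k, gen1w s s' ∈ gr 1
  gen2_gr : ∀ s s' : SV k, gen2 s s' ∈ gr 2
  span0 : gr 0 ≤ Submodule.span k {x | ∃ s s' : SV k, x = gen0 s s'}
  span1 : gr 1 ≤ Submodule.span k
    {x | (∃ s s' : SV k, x = gen1v s s') ∨ (∃ s s' : SV k, x = gen1w s s')}
  span2 : gr 2 ≤ Submodule.span k {x | ∃ s s' : SV k, x = gen2 s s'}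
  smul_gen0 : ∀ s₀ s s' : SV k, s₀ • gen0 s s' = gen0 (s₀ * s) s'
  smul_gen1v : ∀ s₀ s s' : SV k, s₀ • gen1v s s' = gen1v (s₀ * s) s'
  smul_gen1w : ∀ s₀ s s' : SV k, s₀ • gen1w s s' = gen1w (s₀ * s) s'
  smul_gen2 : ∀ s₀ s s' : SV k, s₀ • gen2 s s' = gen2 (s₀ * s) s'
  smul_op_gen0 : ∀ s₁ s s' : SV k, op s₁ • gen0 s s' = gen0 s (s' * s₁)
  smul_op_gen1v : ∀ s₁ s s' : SV k, op s₁ • gen1v s s' = gen1v s (s' * s₁)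
  smul_op_gen1w : ∀ s₁ s s' : SV k, op s₁ • gen1w s s' = gen1w s (s' * s₁)
  smul_op_gen2 : ∀ s₁ s s' : SV k, op s₁ • gen2 s s' = gen2 s (s' * s₁)
  gact_gen0 : ∀ s s' : SV k,
    gg p • gen0 s s' = gen0 (gg p • s) (gg p • s')
  gact_gen1v : ∀ s s' : SV k,
    gg p • gen1v s s' = gen1v (gg p • s) (gg p • s')
  gact_gen1w : ∀ s s' : SV k,
    gg p • gen1w s s' = gen1v (gg p • s) (gg p • s') + gen1w (gg p • s) (gg p • s')
  gact_gen2 : ∀ s s' : SV k,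
    gg p • gen2 s s' = gen2 (gg p • s) (gg p • s')
  d : D →ₗ[k] D
  d_gen0 : ∀ s s' : SV k, d (gen0 s s') = 0
  d_gen1v : ∀ s s' : SV k, d (gen1v s s') = gen0 (s * vv k) s' - gen0 s (vv k * s')
  d_gen1w : ∀ s s' : SV k, d (gen1w s s') = gen0 (s * ww k) s' - gen0 s (ww k * s')
  d_gen2 : ∀ s s' : SV k, d (gen2 s s') =
    gen1w (s * vv k) s' - gen1w s (vv k * s') - gen1v (s * ww k) s' + gen1v s (ww k * s')
  aug : D →ₗ[k] SV k
  aug_gen0 : ∀ s s' : SV k, aug (gen0 s s') = s * s'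
  aug_gr : ∀ (n : ℕ) (x : D), x ∈ gr (n + 1) → aug x = 0

variable (A : Type u) [Ring A] [Algebra k A]

/-- The `k`-linear map `S ⊗ kG → A` sending `s ⊗ g ↦ ιS(s) ιG(g)`; requiring it to be
bijective expresses that `A = S(V) ⋊ G` is the skew group algebra. -/
def skewAssembly (ιS : SV k →ₐ[k] A) (ιG : Gp p →* A) : (Gp p →₀ SV k) →ₗ[k] A :=
  Finsupp.lsum k fun g => (LinearMap.mulRight k (ιG g)) ∘ₗ ιS.toLinearMap

/-- The homogeneous component of total homological degree `n` of `X = C ⊗ D`. -/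
def Xdeg (grC : ℕ → Submodule k C) (grD : ℕ → Submodule k D) (n : ℕ) :
    Submodule k (C ⊗[k] D) :=
  ⨆ (q : ℕ × ℕ) (_ : q.1 + q.2 = n),
    Submodule.span k
      (Set.image2 (fun (c : C) (d : D) => c ⊗ₜ[k] d) (grC q.1 : Set C) (grD q.2 : Set D))

variable {p k C D A}

/-! Peeling the outer group elements and polynomial coefficients off with the bimodule action
reduces `λ` to its prescribed values on `(1 ⊗ y₁ ⊗ 1) ⊗ (1 ⊗ w ⊗ 1)`, which gives
`λ((y₀ ⊗ y₁ ⊗ y₂) ⊗ (s ⊗ w ⊗ s')) = χ(y₁) · ʸs · y g⁻¹ · s'` with `y = y₀y₁y₂` and `χ(gⁱ) = i`,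
while `λ` vanishes on the `v`-generators. Since `λ` lives on `X_{1,1}`, only two components of
`∂` on `X₃` contribute: `∂_C ⊗ 1` on `X_{2,1}`, where the three faces give
`χ(y₂) - χ(y₁y₂) + χ(y₁) = 0` because `χ` is additive, and `ε_C ⊗ ∂_D` on `X_{1,2}`, where the
two `w`-terms of `∂(v ∧ w)` cancel because `v` is `G`-invariant and hence central in `A`. -/

section CyclicGroup

variable {p : ℕ} [Fact p.Prime]

theorem gg_pow (n : ℕ) : gg p ^ n = Multiplicative.ofAdd (n : ZMod p) := by
  rw [gg, ← ofAdd_nsmul, nsmul_one]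

theorem exists_gg_pow_eq (y : Gp p) : ∃ i ≤ p - 1, gg p ^ i = y :=
  ⟨(Multiplicative.toAdd y).val, Nat.le_sub_one_of_lt (ZMod.val_lt _), by
    rw [gg_pow, ZMod.natCast_zmod_val, ofAdd_toAdd]⟩

theorem gg_induction {P : Gp p → Prop} (one : P 1)
    (mul : ∀ y, P y → P (gg p * y)) (y : Gp p) : P y := by
  obtain ⟨i, -, rfl⟩ := exists_gg_pow_eq y
  induction i with
  | zero => exact (pow_zero (gg p)).symm ▸ one
  | succ i ih => exact pow_succ' (gg p) i ▸ mul _ ih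

/-- The exponent `i` of `gⁱ`, read in `k`. -/
def chi {k : Type*} [Ring k] [CharP k p] (y : Gp p) : k :=
  ZMod.castHom (dvd_refl p) k (Multiplicative.toAdd y)

variable {k : Type*} [Ring k] [CharP k p]

@[simp]
theorem chi_mul (y z : Gp p) : (chi (y * z) : k) = chi y + chi z := by
  simp [chi]

@[simp]
theorem chi_one : (chi (1 : Gp p) : k) = 0 := by
  simp [chi]

@[simp]
theorem chi_inv (y : Gp p) : (chi y⁻¹ : k) = -chi y := by
  simp [chi]

@[simp]
theorem chi_gg_pow (i : ℕ) : (chi (gg p ^ i) : k) = i := by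
  simp [chi, gg_pow]

@[simp]
theorem chi_gg : (chi (gg p) : k) = 1 := by
  simpa using chi_gg_pow (p := p) (k := k) 1

/-- `barWord y₀ y₁ y₂` encodes the generator `y₀ ⊗ y₁ ⊗ y₂` of `C₁`. -/
def barWord (y₀ y₁ y₂ : Gp p) : ℕ → Gp p :=
  fun t => if t = 0 then y₀ else if t = 1 then y₁ else if t = 2 then y₂ else 1

theorem update_barWord_zero (y₀ y₁ y₂ z : Gp p) :
    Function.update (barWord y₀ y₁ y₂) 0 z = barWord z y₁ y₂ := by
  funext t
  rcases eq_or_ne t 0 with rfl | h <;> simp [barWord, *]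

theorem update_barWord_two (y₀ y₁ y₂ z : Gp p) :
    Function.update (barWord y₀ y₁ y₂) 2 z = barWord y₀ y₁ z := by
  funext t
  rcases eq_or_ne t 2 with rfl | h <;> simp [barWord, *]

theorem prod_range_barWord (y₀ y₁ y₂ : Gp p) :
    ∏ t ∈ Finset.range 3, barWord y₀ y₁ y₂ t = y₀ * y₁ * y₂ := by
  simp [Finset.prod_range_succ, barWord]

theorem barWord_one_one (y : Gp p) : barWord 1 y 1 = fun t => if t = 1 then y else 1 := by
  funext t
  unfold barWord
  split_ifs <;> simp_all

end CyclicGroup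

theorem smul_vv_of_gg {p : ℕ} [Fact p.Prime] {k : Type*} [Field k] [MulAction (Gp p) (SV k)]
    (hgv : gg p • vv k = vv k) (y : Gp p) : y • vv k = vv k := by
  induction y using gg_induction with
  | one => exact one_smul _ _
  | mul y ih => rw [mul_smul, ih, hgv]

namespace KoszulD

variable {p : ℕ} [Fact p.Prime] {k : Type u} [Field k] [MulSemiringAction (Gp p) (SV k)]
  {D : Type u} [AddCommGroup D] [Module k D] [Module (SV k) D] [Module (SV k)ᵐᵒᵖ D]
  [DistribMulAction (Gp p) D] (RD : KoszulD p k D)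

theorem group_smul_gen1v (y : Gp p) (s s' : SV k) :
    y • RD.gen1v s s' = RD.gen1v (y • s) (y • s') := by
  induction y using gg_induction generalizing s s' with
  | one => simp
  | mul y ih => rw [mul_smul, ih, RD.gact_gen1v, mul_smul, mul_smul]

theorem group_smul_gen1w [CharP k p] [SMulCommClass (Gp p) k D] (y : Gp p) (s s' : SV k) :
    y • RD.gen1w s s' = (chi y : k) • RD.gen1v (y • s) (y • s') + RD.gen1w (y • s) (y • s') := by
  induction y using gg_induction generalizing s s' with
  | one => simp
  | mul y ih =>
    rw [mul_smul, ih, smul_add, smul_comm, RD.gact_gen1v, RD.gact_gen1w, chi_mul, chi_gg,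
      add_smul, one_smul, mul_smul, mul_smul]
    abel

theorem gen1v_eq_smul_gen1v_one (y : Gp p) (s s' : SV k) :
    RD.gen1v s s' = y⁻¹ • op (y • s') • (y • s) • RD.gen1v 1 1 := by
  rw [RD.smul_gen1v, RD.smul_op_gen1v, mul_one, one_mul, group_smul_gen1v, inv_smul_smul,
    inv_smul_smul]

theorem gen1w_eq_smul_gen1w_one [CharP k p] [SMulCommClass (Gp p) k D] (y : Gp p)
    (s s' : SV k) :
    RD.gen1w s s' =
      y⁻¹ • op (y • s') • (y • s) • RD.gen1w 1 1 + (chi y : k) • RD.gen1v s s' := by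
  rw [RD.smul_gen1w, RD.smul_op_gen1w, mul_one, one_mul, group_smul_gen1w, inv_smul_smul,
    inv_smul_smul, chi_inv, neg_smul]
  abel

theorem d_gen1v_mem (s s' : SV k) : RD.d (RD.gen1v s s') ∈ RD.gr 0 := by
  rw [RD.d_gen1v]
  exact sub_mem (RD.gen0_gr _ _) (RD.gen0_gr _ _)

theorem d_gen1w_mem (s s' : SV k) : RD.d (RD.gen1w s s') ∈ RD.gr 0 := by
  rw [RD.d_gen1w]
  exact sub_mem (RD.gen0_gr _ _) (RD.gen0_gr _ _)

theorem d_gen2_mem (s s' : SV k) : RD.d (RD.gen2 s s') ∈ RD.gr 1 := by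
  rw [RD.d_gen2]
  exact add_mem (sub_mem (sub_mem (RD.gen1w_gr _ _) (RD.gen1w_gr _ _)) (RD.gen1v_gr _ _))
    (RD.gen1v_gr _ _)

theorem linearMap_eq_zero {M : Type*} [AddCommGroup M] [Module k M] (F : D →ₗ[k] M)
    (h0 : ∀ s s', F (RD.gen0 s s') = 0) (h1v : ∀ s s', F (RD.gen1v s s') = 0)
    (h1w : ∀ s s', F (RD.gen1w s s') = 0) (h2 : ∀ s s', F (RD.gen2 s s') = 0) : F = 0 := by
  have hgr : ∀ j, RD.gr j ≤ LinearMap.ker F := by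
    intro j
    match j with
    | 0 => exact RD.span0.trans (Submodule.span_le.mpr (by rintro _ ⟨s, s', rfl⟩; exact h0 s s'))
    | 1 =>
      refine RD.span1.trans (Submodule.span_le.mpr ?_)
      rintro _ (⟨s, s', rfl⟩ | ⟨s, s', rfl⟩)
      exacts [h1v s s', h1w s s']
    | 2 => exact RD.span2.trans (Submodule.span_le.mpr (by rintro _ ⟨s, s', rfl⟩; exact h2 s s'))
    | j + 3 => exact RD.gr_top j ▸ bot_le
  rw [← LinearMap.ker_eq_top, eq_top_iff, ← RD.internal.submodule_iSup_eq_top]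
  exact iSup_le hgr

end KoszulD

namespace RedBarC

variable {p : ℕ} [Fact p.Prime] {k : Type u} [Field k]
  {C : Type u} [AddCommGroup C] [Module k C] [Module (MonoidAlgebra k (Gp p)) C]
  [Module (MonoidAlgebra k (Gp p))ᵐᵒᵖ C] (RC : RedBarC p k C)

theorem linearMap_eq_zero {M : Type*} [AddCommGroup M] [Module k M] (F : C →ₗ[k] M)
    (h : ∀ n a, F (RC.gen n a) = 0) : F = 0 := by
  have hgr : ∀ n, RC.gr n ≤ LinearMap.ker F := fun n =>
    (RC.gen_span n).trans (Submodule.span_le.mpr (by rintro _ ⟨a, rfl⟩; exact h n a))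
  rw [← LinearMap.ker_eq_top, eq_top_iff, ← RC.internal.submodule_iSup_eq_top]
  exact iSup_le hgr

theorem gen_one_eq_barWord (a : ℕ → Gp p) :
    RC.gen 1 a = RC.gen 1 (barWord (a 0) (a 1) (a 2)) :=
  RC.gen_congr 1 _ _ fun t ht => by interval_cases t <;> rfl

theorem d_gen_two (a : ℕ → Gp p) :
    RC.d (RC.gen 2 a) = RC.gen 1 (barWord (a 0 * a 1) (a 2) (a 3))
      - RC.gen 1 (barWord (a 0) (a 1 * a 2) (a 3))
      + RC.gen 1 (barWord (a 0) (a 1) (a 2 * a 3)) := by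
  rw [RC.d_gen 1 a, Finset.sum_range_succ, Finset.sum_range_succ, Finset.sum_range_one,
    pow_zero, pow_one, neg_one_sq, one_smul, one_smul, neg_one_smul, ← sub_eq_add_neg]
  refine congrArg₂ (· + ·) (congrArg₂ (· - ·) ?_ ?_) ?_ <;>
    exact RC.gen_congr 1 _ _ fun t ht => by interval_cases t <;> rfl

theorem d_gen_succ_mem (n : ℕ) (a : ℕ → Gp p) : RC.d (RC.gen (n + 1) a) ∈ RC.gr n := by
  rw [RC.d_gen]
  exact Submodule.sum_mem _ fun i _ => Submodule.smul_mem _ _ (RC.gen_gr _ _)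

theorem eps_gen_mem (n : ℕ) (a : ℕ → Gp p) : RC.eps (RC.gen n a) ∈ RC.gr n := by
  rw [RC.eps_gen]
  exact Submodule.smul_mem _ _ (RC.gen_gr _ _)

end RedBarC

section CocycleCriterion

variable {p : ℕ} [Fact p.Prime] {k : Type u} [Field k] [MulSemiringAction (Gp p) (SV k)]
  {C : Type u} [AddCommGroup C] [Module k C] [Module (MonoidAlgebra k (Gp p)) C]
  [Module (MonoidAlgebra k (Gp p))ᵐᵒᵖ C]
  {D : Type u} [AddCommGroup D] [Module k D] [Module (SV k) D] [Module (SV k)ᵐᵒᵖ D]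
  [DistribMulAction (Gp p) D]
  {M : Type*} [AddCommGroup M] [Module k M]
  (RC : RedBarC p k C) (RD : KoszulD p k D) {lam : C ⊗[k] D →ₗ[k] M}

/-- The differential `∂_X = ∂_C ⊗ 1 + ε_C ⊗ ∂_D` of the twisted product resolution. -/
def totalDiff : C ⊗[k] D →ₗ[k] C ⊗[k] D :=
  TensorProduct.map RC.d LinearMap.id + TensorProduct.map RC.eps RD.d

@[simp]
theorem totalDiff_tmul (c : C) (d : D) :
    totalDiff RC RD (c ⊗ₜ[k] d) = RC.d c ⊗ₜ[k] d + RC.eps c ⊗ₜ[k] RD.d d :=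
  rfl

theorem map_d_gen_tmul_eq_zero
    (hsupp : ∀ i j : ℕ, ¬(i = 1 ∧ j = 1) → ∀ c ∈ RC.gr i, ∀ d ∈ RD.gr j, lam (c ⊗ₜ[k] d) = 0)
    {n j : ℕ} (hnj : ¬(n = 2 ∧ j = 1)) (a : ℕ → Gp p) {d : D} (hd : d ∈ RD.gr j) :
    lam (RC.d (RC.gen n a) ⊗ₜ[k] d) = 0 := by
  cases n with
  | zero => rw [RC.d_zero, TensorProduct.zero_tmul, map_zero]
  | succ m => exact hsupp m j (by omega) _ (RC.d_gen_succ_mem m a) d hd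

theorem map_d_gen_two_tmul_gen1v
    (hv : ∀ y₀ y₁ y₂ s s', lam (RC.gen 1 (barWord y₀ y₁ y₂) ⊗ₜ[k] RD.gen1v s s') = 0)
    (a : ℕ → Gp p) (s s' : SV k) : lam (RC.d (RC.gen 2 a) ⊗ₜ[k] RD.gen1v s s') = 0 := by
  simp only [RC.d_gen_two, TensorProduct.add_tmul, TensorProduct.sub_tmul, map_add, map_sub, hv,
    sub_zero, add_zero]

theorem map_d_gen_two_tmul_gen1w [CharP k p] {F : Gp p → SV k → SV k → M}
    (hw : ∀ y₀ y₁ y₂ s s', lam (RC.gen 1 (barWord y₀ y₁ y₂) ⊗ₜ[k] RD.gen1w s s') =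
      (chi y₁ : k) • F (y₀ * y₁ * y₂) s s')
    (a : ℕ → Gp p) (s s' : SV k) : lam (RC.d (RC.gen 2 a) ⊗ₜ[k] RD.gen1w s s') = 0 := by
  simp only [RC.d_gen_two, TensorProduct.add_tmul, TensorProduct.sub_tmul, map_add, map_sub, hw,
    chi_mul, mul_assoc]
  module

theorem map_gen_one_tmul_d_gen2 [CharP k p] {F : Gp p → SV k → SV k → M}
    (hF : ∀ y s s', F y (s * vv k) s' = F y s (vv k * s'))
    (hv : ∀ y₀ y₁ y₂ s s', lam (RC.gen 1 (barWord y₀ y₁ y₂) ⊗ₜ[k] RD.gen1v s s') = 0)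
    (hw : ∀ y₀ y₁ y₂ s s', lam (RC.gen 1 (barWord y₀ y₁ y₂) ⊗ₜ[k] RD.gen1w s s') =
      (chi y₁ : k) • F (y₀ * y₁ * y₂) s s')
    (a : ℕ → Gp p) (s s' : SV k) : lam (RC.gen 1 a ⊗ₜ[k] RD.d (RD.gen2 s s')) = 0 := by
  rw [RC.gen_one_eq_barWord]
  simp only [RD.d_gen2, TensorProduct.tmul_add, TensorProduct.tmul_sub,
    map_add, map_sub, hv, hw, hF, sub_self, add_zero]

theorem map_totalDiff_gen_tmul_eq_zero [CharP k p] {F : Gp p → SV k → SV k → M}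
    (hsupp : ∀ i j : ℕ, ¬(i = 1 ∧ j = 1) → ∀ c ∈ RC.gr i, ∀ d ∈ RD.gr j, lam (c ⊗ₜ[k] d) = 0)
    (hF : ∀ y s s', F y (s * vv k) s' = F y s (vv k * s'))
    (hv : ∀ y₀ y₁ y₂ s s', lam (RC.gen 1 (barWord y₀ y₁ y₂) ⊗ₜ[k] RD.gen1v s s') = 0)
    (hw : ∀ y₀ y₁ y₂ s s', lam (RC.gen 1 (barWord y₀ y₁ y₂) ⊗ₜ[k] RD.gen1w s s') =
      (chi y₁ : k) • F (y₀ * y₁ * y₂) s s')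
    (n : ℕ) (a : ℕ → Gp p) (d : D) : lam (totalDiff RC RD (RC.gen n a ⊗ₜ[k] d)) = 0 := by
  have hepsD : ∀ {j x}, x ∈ RD.gr j → ¬(n = 1 ∧ j = 1) → lam (RC.eps (RC.gen n a) ⊗ₜ[k] x) = 0 :=
    fun hx hnj => hsupp n _ hnj _ (RC.eps_gen_mem n a) _ hx
  refine LinearMap.congr_fun (RD.linearMap_eq_zero
    (lam ∘ₗ totalDiff RC RD ∘ₗ TensorProduct.mk k C D (RC.gen n a)) ?_ ?_ ?_ ?_) d <;>
    intro s s' <;>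
    simp only [LinearMap.comp_apply, TensorProduct.mk_apply, totalDiff_tmul, map_add]
  · rw [RD.d_gen0, TensorProduct.tmul_zero, map_zero, add_zero]
    exact map_d_gen_tmul_eq_zero RC RD hsupp (by omega) a (RD.gen0_gr s s')
  · rw [hepsD (RD.d_gen1v_mem s s') (by omega), add_zero]
    obtain rfl | hn := eq_or_ne n 2
    · exact map_d_gen_two_tmul_gen1v RC RD hv a s s'
    · exact map_d_gen_tmul_eq_zero RC RD hsupp (by omega) a (RD.gen1v_gr s s')
  · rw [hepsD (RD.d_gen1w_mem s s') (by omega), add_zero]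
    obtain rfl | hn := eq_or_ne n 2
    · exact map_d_gen_two_tmul_gen1w RC RD hw a s s'
    · exact map_d_gen_tmul_eq_zero RC RD hsupp (by omega) a (RD.gen1w_gr s s')
  · rw [map_d_gen_tmul_eq_zero RC RD hsupp (by omega) a (RD.gen2_gr s s'), zero_add]
    obtain rfl | hn := eq_or_ne n 1
    · rw [RC.eps_gen, ← TensorProduct.smul_tmul', map_smul,
        map_gen_one_tmul_d_gen2 RC RD hF hv hw, smul_zero]
    · exact hepsD (RD.d_gen2_mem s s') (by omega)

theorem comp_totalDiff_eq_zero [CharP k p] {F : Gp p → SV k → SV k → M}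
    (hsupp : ∀ i j : ℕ, ¬(i = 1 ∧ j = 1) → ∀ c ∈ RC.gr i, ∀ d ∈ RD.gr j, lam (c ⊗ₜ[k] d) = 0)
    (hF : ∀ y s s', F y (s * vv k) s' = F y s (vv k * s'))
    (hv : ∀ y₀ y₁ y₂ s s', lam (RC.gen 1 (barWord y₀ y₁ y₂) ⊗ₜ[k] RD.gen1v s s') = 0)
    (hw : ∀ y₀ y₁ y₂ s s', lam (RC.gen 1 (barWord y₀ y₁ y₂) ⊗ₜ[k] RD.gen1w s s') =
      (chi y₁ : k) • F (y₀ * y₁ * y₂) s s') :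
    lam ∘ₗ totalDiff RC RD = 0 :=
  TensorProduct.ext' fun c d => LinearMap.congr_fun (RC.linearMap_eq_zero
    (lam ∘ₗ totalDiff RC RD ∘ₗ (TensorProduct.mk k C D).flip d)
    fun n a => map_totalDiff_gen_tmul_eq_zero RC RD hsupp hF hv hw n a d) c

end CocycleCriterion

section SkewGroupAlgebra

variable {p : ℕ} [Fact p.Prime] {k : Type u} [Field k]
  {C : Type u} [AddCommGroup C] [Module k C] [Module (MonoidAlgebra k (Gp p)) C]
  [Module (MonoidAlgebra k (Gp p))ᵐᵒᵖ C] {D : Type u} [AddCommGroup D] [Module k D]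
  {A : Type u} [Ring A] [Algebra k A]
  (RC : RedBarC p k C) {ιS : SV k →ₐ[k] A} {ιG : Gp p →* A} {lam : C ⊗[k] D →ₗ[k] A}

theorem map_barWord_tmul_inv_smul_op_smul [Module (SV k)ᵐᵒᵖ D] [MulAction (Gp p) D]
    [Module Aᵐᵒᵖ (C ⊗[k] D)]
    (hactR : ∀ (s : SV k) (g : Gp p) (c : C) (d : D),
      (op (ιS s * ιG g)) • (c ⊗ₜ[k] d) =
        (op (MonoidAlgebra.single g (1 : k)) • c) ⊗ₜ[k] ((g⁻¹ : Gp p) • (op s • d)))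
    (hlamR : ∀ (c : Aᵐᵒᵖ) (x : C ⊗[k] D), lam (c • x) = lam x * c.unop)
    (y₀ y₁ y₂ : Gp p) (s : SV k) (d : D) :
    lam (RC.gen 1 (barWord y₀ y₁ y₂) ⊗ₜ[k] (y₂⁻¹ • op s • d)) =
      lam (RC.gen 1 (barWord y₀ y₁ 1) ⊗ₜ[k] d) * (ιS s * ιG y₂) := by
  have h := hactR s y₂ (RC.gen 1 (barWord y₀ y₁ 1)) d
  rw [RC.smul_op_gen, show barWord y₀ y₁ 1 (1 + 1) = 1 from rfl, one_mul,
    update_barWord_two] at h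
  rw [← h, hlamR, unop_op]

theorem map_barWord_tmul_smul [MulAction (Gp p) (SV k)] [Module (SV k) D] [Module A (C ⊗[k] D)]
    (hactL : ∀ (s' : SV k) (g' : Gp p) (n : ℕ) (a : ℕ → Gp p) (d : D),
      (ιS s' * ιG g') • (RC.gen n a ⊗ₜ[k] d) =
        ((MonoidAlgebra.single g' (1 : k)) • RC.gen n a) ⊗ₜ[k]
          ((((g' * ∏ t ∈ Finset.range (n + 2), a t)⁻¹ : Gp p) • s') • d))
    (hlamL : ∀ (a : A) (x : C ⊗[k] D), lam (a • x) = a * lam x)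
    (y₀ y₁ : Gp p) (u : SV k) (d : D) :
    lam (RC.gen 1 (barWord y₀ y₁ 1) ⊗ₜ[k] (u • d)) =
      ιS ((y₀ * y₁) • u) * ιG y₀ * lam (RC.gen 1 (barWord 1 y₁ 1) ⊗ₜ[k] d) := by
  have h := hactL ((y₀ * y₁) • u) y₀ 1 (barWord 1 y₁ 1) d
  rw [RC.smul_gen, show barWord 1 y₁ 1 0 = 1 from rfl, mul_one, update_barWord_zero,
    prod_range_barWord, one_mul, mul_one, inv_smul_smul] at h
  rw [← h, hlamL]

variable [MulSemiringAction (Gp p) (SV k)] [Module (SV k) D] [Module (SV k)ᵐᵒᵖ D]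
  [DistribMulAction (Gp p) D] (RD : KoszulD p k D)

theorem map_barWord_one_tmul_gen1v
    (hlam_v : ∀ i : ℕ, i ≤ p - 1 →
      lam (RC.gen 1 (fun t => if t = 1 then (gg p) ^ i else 1) ⊗ₜ[k] RD.gen1v 1 1) = 0)
    (y : Gp p) : lam (RC.gen 1 (barWord 1 y 1) ⊗ₜ[k] RD.gen1v 1 1) = 0 := by
  obtain ⟨i, hi, rfl⟩ := exists_gg_pow_eq y
  rw [barWord_one_one, hlam_v i hi]

theorem map_barWord_one_tmul_gen1w [CharP k p]
    (hlam_w : ∀ i : ℕ, i ≤ p - 1 →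
      lam (RC.gen 1 (fun t => if t = 1 then (gg p) ^ i else 1) ⊗ₜ[k] RD.gen1w 1 1) =
        (i : k) • ιG ((gg p) ^ (i - 1)))
    (y : Gp p) :
    lam (RC.gen 1 (barWord 1 y 1) ⊗ₜ[k] RD.gen1w 1 1) = (chi y : k) • ιG (y * (gg p)⁻¹) := by
  obtain ⟨i, hi, rfl⟩ := exists_gg_pow_eq y
  rw [barWord_one_one, hlam_w i hi, chi_gg_pow]
  cases i with
  | zero => simp
  | succ i => rw [pow_succ, mul_inv_cancel_right, Nat.add_sub_cancel]

theorem map_barWord_tmul_gen1v [Module A (C ⊗[k] D)] [Module Aᵐᵒᵖ (C ⊗[k] D)]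
    (hactL : ∀ (s' : SV k) (g' : Gp p) (n : ℕ) (a : ℕ → Gp p) (d : D),
      (ιS s' * ιG g') • (RC.gen n a ⊗ₜ[k] d) =
        ((MonoidAlgebra.single g' (1 : k)) • RC.gen n a) ⊗ₜ[k]
          ((((g' * ∏ t ∈ Finset.range (n + 2), a t)⁻¹ : Gp p) • s') • d))
    (hactR : ∀ (s : SV k) (g : Gp p) (c : C) (d : D),
      (op (ιS s * ιG g)) • (c ⊗ₜ[k] d) =
        (op (MonoidAlgebra.single g (1 : k)) • c) ⊗ₜ[k] ((g⁻¹ : Gp p) • (op s • d)))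
    (hlamL : ∀ (a : A) (x : C ⊗[k] D), lam (a • x) = a * lam x)
    (hlamR : ∀ (c : Aᵐᵒᵖ) (x : C ⊗[k] D), lam (c • x) = lam x * c.unop)
    (hlam_v : ∀ i : ℕ, i ≤ p - 1 →
      lam (RC.gen 1 (fun t => if t = 1 then (gg p) ^ i else 1) ⊗ₜ[k] RD.gen1v 1 1) = 0)
    (y₀ y₁ y₂ : Gp p) (s s' : SV k) :
    lam (RC.gen 1 (barWord y₀ y₁ y₂) ⊗ₜ[k] RD.gen1v s s') = 0 := by
  rw [RD.gen1v_eq_smul_gen1v_one y₂, map_barWord_tmul_inv_smul_op_smul RC hactR hlamR,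
    map_barWord_tmul_smul RC hactL hlamL, map_barWord_one_tmul_gen1v RC RD hlam_v, mul_zero,
    zero_mul]

theorem map_barWord_tmul_gen1w [CharP k p] [SMulCommClass (Gp p) k D]
    [Module A (C ⊗[k] D)] [Module Aᵐᵒᵖ (C ⊗[k] D)]
    (hcomm : ∀ (g : Gp p) (s : SV k), ιG g * ιS s = ιS (g • s) * ιG g)
    (hactL : ∀ (s' : SV k) (g' : Gp p) (n : ℕ) (a : ℕ → Gp p) (d : D),
      (ιS s' * ιG g') • (RC.gen n a ⊗ₜ[k] d) =
        ((MonoidAlgebra.single g' (1 : k)) • RC.gen n a) ⊗ₜ[k]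
          ((((g' * ∏ t ∈ Finset.range (n + 2), a t)⁻¹ : Gp p) • s') • d))
    (hactR : ∀ (s : SV k) (g : Gp p) (c : C) (d : D),
      (op (ιS s * ιG g)) • (c ⊗ₜ[k] d) =
        (op (MonoidAlgebra.single g (1 : k)) • c) ⊗ₜ[k] ((g⁻¹ : Gp p) • (op s • d)))
    (hlamL : ∀ (a : A) (x : C ⊗[k] D), lam (a • x) = a * lam x)
    (hlamR : ∀ (c : Aᵐᵒᵖ) (x : C ⊗[k] D), lam (c • x) = lam x * c.unop)
    (hv : ∀ y₀ y₁ y₂ s s', lam (RC.gen 1 (barWord y₀ y₁ y₂) ⊗ₜ[k] RD.gen1v s s') = 0)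
    (hlam_w : ∀ i : ℕ, i ≤ p - 1 →
      lam (RC.gen 1 (fun t => if t = 1 then (gg p) ^ i else 1) ⊗ₜ[k] RD.gen1w 1 1) =
        (i : k) • ιG ((gg p) ^ (i - 1)))
    (y₀ y₁ y₂ : Gp p) (s s' : SV k) :
    lam (RC.gen 1 (barWord y₀ y₁ y₂) ⊗ₜ[k] RD.gen1w s s') =
      (chi y₁ : k) • (ιS ((y₀ * y₁ * y₂) • s) * ιG (y₀ * y₁ * y₂ * (gg p)⁻¹) * ιS s') := by
  rw [RD.gen1w_eq_smul_gen1w_one y₂, TensorProduct.tmul_add, TensorProduct.tmul_smul (chi y₂ : k),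
    map_add, map_smul lam, hv, smul_zero,
    add_zero, map_barWord_tmul_inv_smul_op_smul RC hactR hlamR,
    map_barWord_tmul_smul RC hactL hlamL, map_barWord_one_tmul_gen1w RC RD hlam_w]
  simp only [mul_smul_comm, smul_mul_assoc]
  rw [← hcomm, smul_smul, ← mul_assoc, mul_assoc _ (ιG y₀), ← map_mul, ← mul_assoc,
    mul_assoc _ (ιG _) (ιG y₂), ← map_mul, mul_right_comm (y₀ * y₁), mul_assoc y₀ y₁ y₂]

end SkewGroupAlgebra

theorem lambda_is_cocycle_general
    (RC : RedBarC p k C) (RD : KoszulD p k D)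
    -- the action of `G` on `S(V) = k[v,w]`: `ᵍv = v`, `ᵍw = v + w`
    (hgv : gg p • vv k = vv k)
    -- the skew group algebra `A = S(V) ⋊ G`
    (ιS : SV k →ₐ[k] A) (ιG : Gp p →* A)
    (hcomm : ∀ (g : Gp p) (s : SV k), ιG g * ιS s = ιS (g • s) * ιG g)
    -- the `A`-bimodule structure on `X = C ⊗ D` (twisted product resolution)
    [Module A (C ⊗[k] D)] [Module Aᵐᵒᵖ (C ⊗[k] D)]
    (hactL : ∀ (s' : SV k) (g' : Gp p) (n : ℕ) (a : ℕ → Gp p) (d : D),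
      (ιS s' * ιG g') • (RC.gen n a ⊗ₜ[k] d) =
        ((MonoidAlgebra.single g' (1 : k)) • RC.gen n a) ⊗ₜ[k]
          ((((g' * ∏ t ∈ Finset.range (n + 2), a t)⁻¹ : Gp p) • s') • d))
    (hactR : ∀ (s : SV k) (g : Gp p) (c : C) (d : D),
      (op (ιS s * ιG g)) • (c ⊗ₜ[k] d) =
        (op (MonoidAlgebra.single g (1 : k)) • c) ⊗ₜ[k] ((g⁻¹ : Gp p) • (op s • d)))
    -- the cochain `λ ∈ Hom_{A^e}(X_{1,1}, A)`:
    (lam : C ⊗[k] D →ₗ[k] A)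
    (hlamL : ∀ (a : A) (x : C ⊗[k] D), lam (a • x) = a * lam x)
    (hlamR : ∀ (c : Aᵐᵒᵖ) (x : C ⊗[k] D), lam (c • x) = lam x * c.unop)
    (hlam_supp : ∀ i j : ℕ, ¬(i = 1 ∧ j = 1) →
      ∀ c ∈ RC.gr i, ∀ d ∈ RD.gr j, lam (c ⊗ₜ[k] d) = 0)
    (hlam_v : ∀ i : ℕ, i ≤ p - 1 →
      lam (RC.gen 1 (fun t => if t = 1 then (gg p) ^ i else 1) ⊗ₜ[k] RD.gen1v 1 1) = 0)
    (hlam_w : ∀ i : ℕ, i ≤ p - 1 →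
      lam (RC.gen 1 (fun t => if t = 1 then (gg p) ^ i else 1) ⊗ₜ[k] RD.gen1w 1 1) =
        (i : k) • ιG ((gg p) ^ (i - 1)))
 :
    lam ∘ₗ (TensorProduct.map RC.d (LinearMap.id : D →ₗ[k] D) +
      TensorProduct.map RC.eps RD.d) = 0 := by
  have hF : ∀ (y : Gp p) (s s' : SV k),
      ιS (y • (s * vv k)) * ιG (y * (gg p)⁻¹) * ιS s' =
        ιS (y • s) * ιG (y * (gg p)⁻¹) * ιS (vv k * s') := by
    intro y s s'
    have hv : ιS (vv k) * ιG (y * (gg p)⁻¹) = ιG (y * (gg p)⁻¹) * ιS (vv k) := by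
      rw [hcomm, smul_vv_of_gg hgv]
    rw [smul_mul', smul_vv_of_gg hgv, map_mul ιS, map_mul ιS, mul_assoc (ιS _) (ιS _), hv]
    simp only [mul_assoc]
  have hv := map_barWord_tmul_gen1v RC RD hactL hactR hlamL hlamR hlam_v
  exact comp_totalDiff_eq_zero RC RD hlam_supp
    (F := fun y s s' => ιS (y • s) * ιG (y * (gg p)⁻¹) * ιS s') hF hv
    (map_barWord_tmul_gen1w RC RD hcomm hactL hactR hlamL hlamR hv hlam_w)

/-- In the transvection group example (`char k = p > 0`,
`G = ⟨g⟩ ≅ ℤ/pℤ` acting on `V = k²` by `ᵍv = v`, `ᵍw = v + w`, `A = S(V) ⋊ G`,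
`X = C ⊗^G D` for `C` the reduced bar resolution of `kG` and `D` the Koszul resolution
of `S(V)`), the cochain `λ ∈ Hom_{A^e}(X_{1,1}, A)` determined by
`λ((1 ⊗ gⁱ ⊗ 1) ⊗ (1 ⊗ v ⊗ 1)) = 0` and `λ((1 ⊗ gⁱ ⊗ 1) ⊗ (1 ⊗ w ⊗ 1)) = i g^{i−1}`,
extended by zero to the other components of `X₂`, is a Hochschild 2-cocycle on `X`, i.e.
it vanishes on the image of the differential `∂ : X₃ → X₂`
(where `∂_X = ∂_C ⊗ 1 + ε_C ⊗ ∂_D`). -/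
theorem lambda_is_cocycle
    (RC : RedBarC p k C) (RD : KoszulD p k D)
    -- the action of `G` on `S(V) = k[v,w]`: `ᵍv = v`, `ᵍw = v + w`
    (hgv : gg p • vv k = vv k) (hgw : gg p • ww k = vv k + ww k)
    -- the skew group algebra `A = S(V) ⋊ G`
    (ιS : SV k →ₐ[k] A) (ιG : Gp p →* A)
    (hcomm : ∀ (g : Gp p) (s : SV k), ιG g * ιS s = ιS (g • s) * ιG g)
    (hskew : Function.Bijective (skewAssembly p k A ιS ιG))
    -- the `A`-bimodule structure on `X = C ⊗ D` (twisted product resolution)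
    [Module A (C ⊗[k] D)] [Module Aᵐᵒᵖ (C ⊗[k] D)]
    [IsScalarTower k A (C ⊗[k] D)] [IsScalarTower k Aᵐᵒᵖ (C ⊗[k] D)]
    [SMulCommClass A Aᵐᵒᵖ (C ⊗[k] D)]
    (hactL : ∀ (s' : SV k) (g' : Gp p) (n : ℕ) (a : ℕ → Gp p) (d : D),
      (ιS s' * ιG g') • (RC.gen n a ⊗ₜ[k] d) =
        ((MonoidAlgebra.single g' (1 : k)) • RC.gen n a) ⊗ₜ[k]
          ((((g' * ∏ t ∈ Finset.range (n + 2), a t)⁻¹ : Gp p) • s') • d))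
    (hactR : ∀ (s : SV k) (g : Gp p) (c : C) (d : D),
      (op (ιS s * ιG g)) • (c ⊗ₜ[k] d) =
        (op (MonoidAlgebra.single g (1 : k)) • c) ⊗ₜ[k] ((g⁻¹ : Gp p) • (op s • d)))
    -- the cochain `λ ∈ Hom_{A^e}(X_{1,1}, A)`:
    (lam : C ⊗[k] D →ₗ[k] A)
    (hlamL : ∀ (a : A) (x : C ⊗[k] D), lam (a • x) = a * lam x)
    (hlamR : ∀ (c : Aᵐᵒᵖ) (x : C ⊗[k] D), lam (c • x) = lam x * c.unop)
    (hlam_supp : ∀ i j : ℕ, ¬(i = 1 ∧ j = 1) →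
      ∀ c ∈ RC.gr i, ∀ d ∈ RD.gr j, lam (c ⊗ₜ[k] d) = 0)
    (hlam_v : ∀ i : ℕ, i ≤ p - 1 →
      lam (RC.gen 1 (fun t => if t = 1 then (gg p) ^ i else 1) ⊗ₜ[k] RD.gen1v 1 1) = 0)
    (hlam_w : ∀ i : ℕ, i ≤ p - 1 →
      lam (RC.gen 1 (fun t => if t = 1 then (gg p) ^ i else 1) ⊗ₜ[k] RD.gen1w 1 1) =
        (i : k) • ιG ((gg p) ^ (i - 1)))
 :
    lam ∘ₗ (TensorProduct.map RC.d (LinearMap.id : D →ₗ[k] D) +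
      TensorProduct.map RC.eps RD.d) = 0 :=
  lambda_is_cocycle_general RC RD hgv ιS ιG hcomm hactL hactR lam hlamL hlamR hlam_supp hlam_v
    hlam_w

end
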